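/- Let G be a finite simple connected graph on n vertices with Laplacian L whose second-smallest eigenvalue is σ₂ > 0, and let R_max = max over pairs of distinct vertices u, v of the effective resistance R_{u,v}. Then 1/(n σ₂) ≤ R_max ≤ 2/σ₂. -/

import Mathlib

open Matrix Finset

/-- The effective resistance `R_{u,v} = (1_u − 1_v)ᵀ (L + (1/n)J)⁻¹ (1_u − 1_v)`. -/
noncomputable def effRes {V : Type*} [Fintype V] [DecidableEq V] (G : SimpleGraph V)
    [DecidableRel G.Adj] (u v : V) : ℝ :=
  (Pi.single u 1 - Pi.single v 1) ⬝ᵥ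
    ((G.lapMatrix ℝ + ((Fintype.card V : ℝ))⁻¹ • Matrix.of (fun _ _ : V => (1 : ℝ)))⁻¹ *ᵥ
      (Pi.single u 1 - Pi.single v 1))

/-!
Write `M = L + J/n`: it is positive definite, agrees with `L` on vectors of sum zero and preserves
sums, and `R_{u,v} = xᵀ M⁻¹ x` for `x = 1_u − 1_v`.

Upper bound: `y = M⁻¹ x` has sum zero, so `R_{u,v} = xᵀ y = yᵀ L y ≥ σ₂ ‖y‖²`, while
`xᵀ y ≤ ‖x‖ ‖y‖ = √2 ‖y‖`; together `R_{u,v} ≤ 2 / σ₂`.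

Lower bound: for a `σ₂`-eigenvector `w` (which has sum zero), Cauchy–Schwarz for the inner product
given by `M` yields `(w_a − w_b)² = (wᵀ x)² ≤ (wᵀ M w)(xᵀ M⁻¹ x) = σ₂ ‖w‖² R_{a,b}`. Taking `a`, `b`
where `w` is largest and smallest, every `|w_i| ≤ w_a − w_b`, so `‖w‖² ≤ n (w_a − w_b)²`.
-/

theorem dotProduct_le_div_of_mul_dotProduct_self_le {n : Type*} [Fintype n] {x y : n → ℝ} {c : ℝ}
    (hc : 0 < c) (h : c * (y ⬝ᵥ y) ≤ x ⬝ᵥ y) : x ⬝ᵥ y ≤ (x ⬝ᵥ x) / c := by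
  have hCS := real_inner_mul_inner_self_le (WithLp.toLp 2 x) (WithLp.toLp 2 y)
  simp only [EuclideanSpace.inner_toLp_toLp, star_trivial, dotProduct_comm y] at hCS
  have hxx : 0 ≤ x ⬝ᵥ x := by simpa using dotProduct_star_self_nonneg x
  rw [le_div_iff₀ hc]
  rcases le_or_gt (x ⬝ᵥ y) 0 with hxy | hxy <;> nlinarith

theorem dotProduct_self_le_card_mul_sq_sub_of_sum_eq_zero {n : Type*} [Fintype n] {w : n → ℝ}
    (hw : ∑ i, w i = 0) {a b : n} (ha : ∀ i, w i ≤ w a) (hb : ∀ i, w b ≤ w i) :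
    w ⬝ᵥ w ≤ Fintype.card n * (w a - w b) ^ 2 := by
  have hcard : (0 : ℝ) < Fintype.card n := Nat.cast_pos.2 (Fintype.card_pos_iff.2 ⟨a⟩)
  have hsum_le : ∑ i, w i ≤ Fintype.card n * w a := by
    simpa using sum_le_sum fun i (_ : i ∈ univ) => ha i
  have hsum_ge : Fintype.card n * w b ≤ ∑ i, w i := by
    simpa using sum_le_sum fun i (_ : i ∈ univ) => hb i
  have hwa : 0 ≤ w a := nonneg_of_mul_nonneg_right (hw ▸ hsum_le) hcard
  have hwb : w b ≤ 0 := nonpos_of_mul_nonpos_right (hw ▸ hsum_ge) hcard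
  calc w ⬝ᵥ w ≤ ∑ _i : n, (w a - w b) ^ 2 :=
        sum_le_sum fun i _ => by nlinarith [ha i, hb i]
    _ = Fintype.card n * (w a - w b) ^ 2 := by simp

theorem dotProduct_self_single_sub_single {V : Type*} [Fintype V] [DecidableEq V] {u v : V}
    (huv : u ≠ v) :
    (Pi.single u 1 - Pi.single v 1 : V → ℝ) ⬝ᵥ (Pi.single u 1 - Pi.single v 1) = 2 := by
  simp [dotProduct_sub, huv, huv.symm]
  norm_num

namespace Matrix

variable {n : Type*} [Fintype n]

theorem mulVec_nonsing_inv_mulVec [DecidableEq n] {R : Type*} [CommRing R] (A : Matrix n n R)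
    (h : IsUnit A.det) (x : n → R) : A *ᵥ (A⁻¹ *ᵥ x) = x := by
  rw [mulVec_mulVec, mul_nonsing_inv A h, one_mulVec]

theorem PosSemidef.dotProduct_mulVec_sq_le {M : Matrix n n ℝ} (hM : M.PosSemidef) (x y : n → ℝ) :
    (x ⬝ᵥ (M *ᵥ y)) ^ 2 ≤ (x ⬝ᵥ (M *ᵥ x)) * (y ⬝ᵥ (M *ᵥ y)) := by
  let _ := M.toSeminormedAddCommGroup hM
  let _ := M.toInnerProductSpace hM
  have hinner : ∀ a b : n → ℝ, inner ℝ a b = a ⬝ᵥ (M *ᵥ b) := fun a b => by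
    change (M *ᵥ b) ⬝ᵥ star a = _
    rw [star_trivial, dotProduct_comm]
  simpa only [sq, hinner] using real_inner_mul_inner_self_le x y

theorem PosDef.dotProduct_sq_le_mul_dotProduct_inv_mulVec [DecidableEq n] {M : Matrix n n ℝ}
    (hM : M.PosDef) (w x : n → ℝ) :
    (w ⬝ᵥ x) ^ 2 ≤ (w ⬝ᵥ (M *ᵥ w)) * (x ⬝ᵥ (M⁻¹ *ᵥ x)) := by
  have hMz := M.mulVec_nonsing_inv_mulVec ((isUnit_iff_isUnit_det M).1 hM.isUnit) x
  simpa only [hMz, dotProduct_comm x] using hM.posSemidef.dotProduct_mulVec_sq_le w (M⁻¹ *ᵥ x)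

/-- Expanding `y` in an orthonormal eigenbasis of `A`, only eigenvalues `≥ σ` contribute. -/
theorem IsHermitian.mul_dotProduct_self_le_dotProduct_mulVec [DecidableEq n] {A : Matrix n n ℝ}
    (hA : A.IsHermitian) {σ : ℝ} {y : n → ℝ}
    (hy : ∀ j, hA.eigenvalues j < σ → ⇑(hA.eigenvectorBasis j) ⬝ᵥ y = 0) :
    σ * (y ⬝ᵥ y) ≤ y ⬝ᵥ (A *ᵥ y) := by
  set b := hA.eigenvectorBasis
  have parseval : ∀ z : n → ℝ, y ⬝ᵥ z = ∑ j, (⇑(b j) ⬝ᵥ y) * (⇑(b j) ⬝ᵥ z) := fun z => by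
    have h := b.sum_inner_mul_inner (WithLp.toLp 2 y) (WithLp.toLp 2 z)
    simp only [EuclideanSpace.inner_eq_star_dotProduct, star_trivial] at h
    simpa [dotProduct_comm] using h.symm
  have hb : ∀ j, ⇑(b j) ⬝ᵥ (A *ᵥ y) = hA.eigenvalues j * (⇑(b j) ⬝ᵥ y) := fun j => by
    rw [dotProduct_mulVec, ← mulVec_transpose, ← conjTranspose_eq_transpose_of_trivial, hA.eq,
      hA.mulVec_eigenvectorBasis, smul_dotProduct, smul_eq_mul]
  rw [parseval, parseval, mul_sum]
  refine sum_le_sum fun j _ => ?_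
  rw [hb]
  rcases lt_or_ge (hA.eigenvalues j) σ with hj | hj
  · simp [hy j hj]
  · nlinarith [mul_self_nonneg (⇑(b j) ⬝ᵥ y)]

end Matrix

namespace SimpleGraph

variable {V : Type*} [Fintype V] [DecidableEq V] {G : SimpleGraph V} [DecidableRel G.Adj]

theorem sum_lapMatrix_mulVec (y : V → ℝ) : ∑ i, (G.lapMatrix ℝ *ᵥ y) i = 0 := by
  calc ∑ i, (G.lapMatrix ℝ *ᵥ y) i = (fun _ => 1) ⬝ᵥ (G.lapMatrix ℝ *ᵥ y) := by
        simp [dotProduct]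
    _ = (G.lapMatrix ℝ *ᵥ fun _ => 1) ⬝ᵥ y := by
        rw [dotProduct_mulVec, ← mulVec_transpose, (G.isSymm_lapMatrix (R := ℝ)).eq]
    _ = 0 := by rw [lapMatrix_mulVec_const_eq_zero, zero_dotProduct]

theorem sum_eq_zero_of_lapMatrix_mulVec_eq_smul {σ : ℝ} (hσ : σ ≠ 0) {w : V → ℝ}
    (hw : G.lapMatrix ℝ *ᵥ w = σ • w) : ∑ i, w i = 0 := by
  have h := G.sum_lapMatrix_mulVec w
  rw [hw] at h
  simpa [← mul_sum, hσ] using h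

theorem dotProduct_eq_zero_of_lapMatrix_mulVec_eq_zero (hconn : G.Connected) {x y : V → ℝ}
    (hx : G.lapMatrix ℝ *ᵥ x = 0) (hy : ∑ i, y i = 0) : x ⬝ᵥ y = 0 := by
  obtain ⟨v⟩ := hconn.nonempty
  have hconst : ∀ i, x i = x v := fun i =>
    (lapMatrix_mulVec_eq_zero_iff_forall_reachable G).1 hx i v (hconn.preconnected i v)
  simp [dotProduct, hconst, ← mul_sum, hy]

theorem mul_dotProduct_self_le_dotProduct_lapMatrix_mulVec (hconn : G.Connected) {σ : ℝ}
    (hσ : ∀ t : ℝ, Module.End.HasEigenvalue (mulVecLin (G.lapMatrix ℝ)) t → t ≠ 0 → σ ≤ t)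
    {y : V → ℝ} (hy : ∑ i, y i = 0) : σ * (y ⬝ᵥ y) ≤ y ⬝ᵥ (G.lapMatrix ℝ *ᵥ y) := by
  have hL := G.isHermitian_lapMatrix ℝ
  refine hL.mul_dotProduct_self_le_dotProduct_mulVec fun j hj => ?_
  have hbj := hL.mulVec_eigenvectorBasis j
  have hμ : hL.eigenvalues j = 0 := by
    by_contra hne
    have hvec : Module.End.HasEigenvector (mulVecLin (G.lapMatrix ℝ)) (hL.eigenvalues j)
        ⇑(hL.eigenvectorBasis j) :=
      ⟨Module.End.mem_eigenspace_iff.2 hbj,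
        (WithLp.ofLp_eq_zero 2).ne.2 (hL.eigenvectorBasis.orthonormal.ne_zero j)⟩
    exact hj.not_ge (hσ _ (Module.End.hasEigenvalue_of_hasEigenvector hvec) hne)
  exact dotProduct_eq_zero_of_lapMatrix_mulVec_eq_zero hconn (by rw [hbj, hμ, zero_smul]) hy

variable (G) in
noncomputable def shiftedLapMatrix : Matrix V V ℝ :=
  G.lapMatrix ℝ + (Fintype.card V : ℝ)⁻¹ • of fun _ _ => 1

theorem shiftedLapMatrix_mulVec (y : V → ℝ) :
    G.shiftedLapMatrix *ᵥ y = G.lapMatrix ℝ *ᵥ y + fun _ => (∑ i, y i) / Fintype.card V := by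
  ext i
  simp only [shiftedLapMatrix, add_mulVec, smul_mulVec, Pi.add_apply, Pi.smul_apply]
  simp [mulVec, dotProduct, div_eq_inv_mul]

theorem shiftedLapMatrix_mulVec_of_sum_eq_zero {y : V → ℝ} (hy : ∑ i, y i = 0) :
    G.shiftedLapMatrix *ᵥ y = G.lapMatrix ℝ *ᵥ y := by
  rw [shiftedLapMatrix_mulVec, hy, zero_div]
  exact add_zero _

theorem sum_shiftedLapMatrix_mulVec [Nonempty V] (y : V → ℝ) :
    ∑ i, (G.shiftedLapMatrix *ᵥ y) i = ∑ i, y i := by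
  have hcard : (Fintype.card V : ℝ) ≠ 0 := Nat.cast_ne_zero.2 Fintype.card_ne_zero
  simp [shiftedLapMatrix_mulVec, sum_add_distrib, sum_lapMatrix_mulVec, mul_div_cancel₀ _ hcard]

theorem posDef_shiftedLapMatrix (hconn : G.Connected) : G.shiftedLapMatrix.PosDef := by
  have := hconn.nonempty
  refine PosDef.of_dotProduct_mulVec_pos ?_ fun x hx => ?_
  · rw [IsHermitian, conjTranspose_eq_transpose_of_trivial, shiftedLapMatrix, transpose_add,
      transpose_smul, (G.isSymm_lapMatrix (R := ℝ)).eq]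
    rfl
  · have hL := posSemidef_lapMatrix ℝ G
    have hq : 0 ≤ x ⬝ᵥ (G.lapMatrix ℝ *ᵥ x) := by simpa using hL.dotProduct_mulVec_nonneg x
    have hmean : x ⬝ᵥ (fun _ => (∑ i, x i) / Fintype.card V) =
        (∑ i, x i) ^ 2 / Fintype.card V := by
      simp [dotProduct, ← sum_mul, sq, mul_div_assoc]
    have hmean_nonneg : 0 ≤ (∑ i, x i) ^ 2 / Fintype.card V := by positivity
    rw [star_trivial, shiftedLapMatrix_mulVec, dotProduct_add, hmean]
    by_contra hle
    have hLx : G.lapMatrix ℝ *ᵥ x = 0 :=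
      (hL.dotProduct_mulVec_zero_iff x).1 (by rw [star_trivial]; linarith)
    have hsum : ∑ i, x i = 0 := by
      have : (∑ i, x i) ^ 2 / Fintype.card V = 0 := by linarith
      simpa [Fintype.card_ne_zero] using this
    exact hx <| dotProduct_self_eq_zero.1 <|
      dotProduct_eq_zero_of_lapMatrix_mulVec_eq_zero hconn hLx hsum

theorem isUnit_det_shiftedLapMatrix (hconn : G.Connected) : IsUnit G.shiftedLapMatrix.det :=
  (isUnit_iff_isUnit_det _).1 (posDef_shiftedLapMatrix hconn).isUnit

theorem sum_shiftedLapMatrix_inv_mulVec (hconn : G.Connected) {x : V → ℝ} (hx : ∑ i, x i = 0) :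
    ∑ i, (G.shiftedLapMatrix⁻¹ *ᵥ x) i = 0 := by
  have := hconn.nonempty
  rw [← sum_shiftedLapMatrix_mulVec (G := G),
    mulVec_nonsing_inv_mulVec _ (isUnit_det_shiftedLapMatrix hconn), hx]

end SimpleGraph

section

variable {V : Type*} [Fintype V] [DecidableEq V] {G : SimpleGraph V} [DecidableRel G.Adj]

theorem effRes_eq (u v : V) : effRes G u v = (Pi.single u 1 - Pi.single v 1) ⬝ᵥ
    (G.shiftedLapMatrix⁻¹ *ᵥ (Pi.single u 1 - Pi.single v 1)) :=
  rfl

theorem effRes_le_two_div (hconn : G.Connected) {σ : ℝ} (hσpos : 0 < σ)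
    (hσ : ∀ t : ℝ, Module.End.HasEigenvalue (mulVecLin (G.lapMatrix ℝ)) t → t ≠ 0 → σ ≤ t)
    {u v : V} (huv : u ≠ v) : effRes G u v ≤ 2 / σ := by
  set x : V → ℝ := Pi.single u 1 - Pi.single v 1
  set y := G.shiftedLapMatrix⁻¹ *ᵥ x
  have hy : ∑ i, y i = 0 :=
    G.sum_shiftedLapMatrix_inv_mulVec hconn (by simp [x, sum_sub_distrib])
  have hMy : G.shiftedLapMatrix *ᵥ y = x :=
    mulVec_nonsing_inv_mulVec _ (G.isUnit_det_shiftedLapMatrix hconn) x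
  have hxy : x ⬝ᵥ y = y ⬝ᵥ (G.lapMatrix ℝ *ᵥ y) := by
    rw [← G.shiftedLapMatrix_mulVec_of_sum_eq_zero hy, hMy, dotProduct_comm]
  calc effRes G u v = x ⬝ᵥ y := effRes_eq u v
    _ ≤ (x ⬝ᵥ x) / σ := dotProduct_le_div_of_mul_dotProduct_self_le hσpos
        (hxy ▸ G.mul_dotProduct_self_le_dotProduct_lapMatrix_mulVec hconn hσ hy)
    _ = 2 / σ := by rw [dotProduct_self_single_sub_single huv]

theorem exists_ne_one_div_le_effRes (hconn : G.Connected) {σ : ℝ} (hσpos : 0 < σ)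
    (hσ : Module.End.HasEigenvalue (mulVecLin (G.lapMatrix ℝ)) σ) :
    ∃ a b, a ≠ b ∧ 1 / (Fintype.card V * σ) ≤ effRes G a b := by
  obtain ⟨w, hw⟩ := hσ.exists_hasEigenvector
  have hLw : G.lapMatrix ℝ *ᵥ w = σ • w := hw.apply_eq_smul
  have hsum := G.sum_eq_zero_of_lapMatrix_mulVec_eq_smul hσpos.ne' hLw
  have hww : 0 < w ⬝ᵥ w := by simpa using dotProduct_star_self_pos_iff.2 hw.2
  have := hconn.nonempty
  obtain ⟨a, ha⟩ := Finite.exists_max w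
  obtain ⟨b, hb⟩ := Finite.exists_min w
  have hspread := dotProduct_self_le_card_mul_sq_sub_of_sum_eq_zero hsum ha hb
  have hCS : (w a - w b) ^ 2 ≤ σ * (w ⬝ᵥ w) * effRes G a b := by
    have h := (G.posDef_shiftedLapMatrix hconn).dotProduct_sq_le_mul_dotProduct_inv_mulVec w
      (Pi.single a 1 - Pi.single b 1)
    rwa [dotProduct_sub, dotProduct_single_one, dotProduct_single_one,
      G.shiftedLapMatrix_mulVec_of_sum_eq_zero hsum, hLw, dotProduct_smul, smul_eq_mul,
      ← effRes_eq] at h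
  refine ⟨a, b, fun hab => ?_, ?_⟩
  · subst hab
    simp at hspread
    linarith
  · have hcard : (0 : ℝ) < Fintype.card V := Nat.cast_pos.2 (Fintype.card_pos_iff.2 ⟨a⟩)
    rw [div_le_iff₀ (by positivity)]
    nlinarith

end

theorem max_resistance_spectral_gap_bounds_general {V : Type*} [Fintype V] [DecidableEq V]
    (G : SimpleGraph V) [DecidableRel G.Adj]
    (hconn : G.Connected)
    (σ₂ : ℝ) (hσpos : 0 < σ₂)
    (hσeig : Module.End.HasEigenvalue (Matrix.mulVecLin (G.lapMatrix ℝ)) σ₂)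
    (hσmin : ∀ t : ℝ, Module.End.HasEigenvalue (Matrix.mulVecLin (G.lapMatrix ℝ)) t →
      t ≠ 0 → σ₂ ≤ t)
    (Rmax : ℝ)
    (hRmax : IsGreatest {x : ℝ | ∃ u v : V, u ≠ v ∧ x = effRes G u v} Rmax) :
    1 / ((Fintype.card V : ℝ) * σ₂) ≤ Rmax ∧ Rmax ≤ 2 / σ₂ := by
  obtain ⟨a, b, hab, hlower⟩ := exists_ne_one_div_le_effRes hconn hσpos hσeig
  obtain ⟨u, v, huv, rfl⟩ := hRmax.1
  exact ⟨hlower.trans (hRmax.2 ⟨a, b, hab, rfl⟩), effRes_le_two_div hconn hσpos hσmin huv⟩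

/-- for a connected graph `G` on `n` vertices with Laplacian `L` whose
second-smallest eigenvalue is `σ₂ > 0` (characterized, since `G` is connected, as the smallest
nonzero eigenvalue of `L`), and `R_max` the maximum effective resistance over pairs of distinct
vertices, `1/(n σ₂) ≤ R_max ≤ 2/σ₂`. -/
theorem max_resistance_spectral_gap_bounds {V : Type*} [Fintype V] [DecidableEq V]
    (G : SimpleGraph V) [DecidableRel G.Adj]
    (hconn : G.Connected) (hcard : 2 ≤ Fintype.card V)
    (σ₂ : ℝ) (hσpos : 0 < σ₂)
    (hσeig : Module.End.HasEigenvalue (Matrix.mulVecLin (G.lapMatrix ℝ)) σ₂)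
    (hσmin : ∀ t : ℝ, Module.End.HasEigenvalue (Matrix.mulVecLin (G.lapMatrix ℝ)) t →
      t ≠ 0 → σ₂ ≤ t)
    (Rmax : ℝ)
    (hRmax : IsGreatest {x : ℝ | ∃ u v : V, u ≠ v ∧ x = effRes G u v} Rmax) :
    1 / ((Fintype.card V : ℝ) * σ₂) ≤ Rmax ∧ Rmax ≤ 2 / σ₂ :=
  max_resistance_spectral_gap_bounds_general G hconn σ₂ hσpos hσeig hσmin Rmax hRmax
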